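/- arXiv:1406.4791 — 8 statements merged into one kernel-verified Lean document; each statement's English description precedes it below -/
import Mathlib

section
/- Let C be a category and W a class of morphisms satisfying CF1, CF2, CF3. Define two spans (u : C → A, u' : C → A') and (v : D → A, v' : D → A') over a fixed pair of W-morphisms w : A → B, w' : A' → B (with w∘u = w'∘u' ∈ W and w∘v = w'∘v' ∈ W) to be related if there exist r : E → C and s : E → D with u∘r = v∘s, u'∘r = v'∘s, and w∘u∘r ∈ W. Then this relation is an equivalence relation on such spans. -/
/-!
STATEMENT 1: For a category `C` and a class `W` satisfying CF1–CF3, the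
relation on connecting spans between two fixed `W`-morphisms `w : A ⟶ B`,
`w' : A' ⟶ B` ("there is a common refinement on which the two spans agree,
with composite in `W`") is an equivalence relation.
-/

open CategoryTheory

universe v u

variable {C : Type u} [Category.{v} C]

/-- The Gabriel–Zisman (right) calculus of fractions conditions CF1–CF3. -/
structure FractionsCalculus (W : MorphismProperty C) : Prop where
  isos : ∀ {X Y : C} (f : X ⟶ Y), IsIso f → W f
  comp : ∀ {X Y Z : C} (f : X ⟶ Y) (g : Y ⟶ Z), W f → W g → W (f ≫ g)
  ore : ∀ {X A B : C} (f : X ⟶ B) (w : A ⟶ B), W w →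
    ∃ (D : C) (fbar : D ⟶ A) (wbar : D ⟶ X), W wbar ∧ fbar ≫ w = wbar ≫ f
  cancel : ∀ {A B X : C} (f g : A ⟶ B) (w : B ⟶ X), W w → f ≫ w = g ≫ w →
    ∃ (Y : C) (wt : Y ⟶ A), W wt ∧ wt ≫ f = wt ≫ g

/-- A connecting span between `w : A ⟶ B` and `w' : A' ⟶ B`: a span
`(u : C₀ ⟶ A, u' : C₀ ⟶ A')` with `u ≫ w = u' ≫ w'` and this common
composite in `W`. -/
structure ConnSpan (W : MorphismProperty C) {A A' B : C} (w : A ⟶ B) (w' : A' ⟶ B) where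
  top : C
  u : top ⟶ A
  u' : top ⟶ A'
  comm : u ≫ w = u' ≫ w'
  mem : W (u ≫ w)

/-- Two connecting spans are related when there are arrows `r`, `s` to their
vertices making everything commute, with `r ≫ u ≫ w ∈ W`. -/
def SpanEquiv (W : MorphismProperty C) {A A' B : C} (w : A ⟶ B) (w' : A' ⟶ B)
    (S T : ConnSpan W w w') : Prop :=
  ∃ (E : C) (r : E ⟶ S.top) (s : E ⟶ T.top),
    r ≫ S.u = s ≫ T.u ∧ r ≫ S.u' = s ≫ T.u' ∧ W (r ≫ S.u ≫ w)


namespace FractionsCalculus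

variable {W : MorphismProperty C} (hW : FractionsCalculus W)
include hW

/-- Cancel `w` on the first leg, then `w'` on the second. -/
theorem exists_mem_comp_eq_comp_of_comp_eq {A A' B Z X : C} {w : A ⟶ B} {w' : A' ⟶ B}
    (hw : W w) (hw' : W w') {u : Z ⟶ A} {u' : Z ⟶ A'} (comm : u ≫ w = u' ≫ w')
    {f g : X ⟶ Z} (h : f ≫ u ≫ w = g ≫ u ≫ w) :
    ∃ (Y : C) (t : Y ⟶ X), W t ∧ t ≫ f ≫ u = t ≫ g ≫ u ∧ t ≫ f ≫ u' = t ≫ g ≫ u' := by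
  obtain ⟨Y₁, t₁, ht₁, hu⟩ := hW.cancel (f ≫ u) (g ≫ u) w hw (by simpa using h)
  have hu' : (t₁ ≫ f ≫ u') ≫ w' = (t₁ ≫ g ≫ u') ≫ w' := by
    simpa [← comm] using hu =≫ w
  obtain ⟨Y₂, t₂, ht₂, hu'₂⟩ := hW.cancel _ _ w' hw' hu'
  exact ⟨Y₂, t₂ ≫ t₁, hW.comp _ _ ht₂ ht₁, by simp [hu], by simpa using hu'₂⟩

end FractionsCalculus

namespace SpanEquiv

variable {W : MorphismProperty C} {A A' B : C} {w : A ⟶ B} {w' : A' ⟶ B}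

theorem refl (S : ConnSpan W w w') : SpanEquiv W w w' S S :=
  ⟨S.top, 𝟙 _, 𝟙 _, rfl, rfl, by simpa using S.mem⟩

theorem symm {S T : ConnSpan W w w'} : SpanEquiv W w w' S T → SpanEquiv W w w' T S := by
  rintro ⟨E, r, s, hu, hu', hmem⟩
  exact ⟨E, s, r, hu.symm, hu'.symm, by simpa [reassoc_of% hu] using hmem⟩

/-- The two refinements are made to meet by an Ore square over `T`, and the two resulting
maps into `T` are then equalized by a morphism of `W`. -/
theorem trans (hW : FractionsCalculus W) (hw : W w) (hw' : W w') {S T U : ConnSpan W w w'} :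
    SpanEquiv W w w' S T → SpanEquiv W w w' T U → SpanEquiv W w w' S U := by
  rintro ⟨E, r, s, hru, hru', hmem⟩ ⟨E', r', s', hsu, hsu', hmem'⟩
  have hsT : W (s ≫ T.u ≫ w) := by simpa [reassoc_of% hru] using hmem
  obtain ⟨D, p, q, hq, hpq⟩ := hW.ore (r' ≫ T.u ≫ w) (s ≫ T.u ≫ w) hsT
  obtain ⟨Y, t, ht, htu, htu'⟩ :=
    hW.exists_mem_comp_eq_comp_of_comp_eq hw hw' T.comm (f := p ≫ s) (g := q ≫ r')
      (by simpa using hpq)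
  refine ⟨Y, t ≫ p ≫ r, t ≫ q ≫ s', by simpa [hru, hsu] using htu,
    by simpa [hru', hsu'] using htu', ?_⟩
  have hreroute : (t ≫ p ≫ r) ≫ S.u ≫ w = t ≫ q ≫ r' ≫ T.u ≫ w := by
    simp [reassoc_of% hru, reassoc_of% htu]
  rw [hreroute]
  exact hW.comp _ _ ht (hW.comp _ _ hq hmem')

end SpanEquiv

theorem statement1 (W : MorphismProperty C) (hW : FractionsCalculus W)
    {A A' B : C} (w : A ⟶ B) (w' : A' ⟶ B) (hw : W w) (hw' : W w') :
    Equivalence (SpanEquiv W w w') :=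
  ⟨SpanEquiv.refl, SpanEquiv.symm, SpanEquiv.trans hW hw hw'⟩
end

section
/- Let C be a category and W a class of morphisms satisfying CF1, CF2, CF3. Then any two connecting spans between fixed objects w : A → B and w' : A' → B of W are equivalent; that is, for any two spans (u, u') and (v, v') with w∘u = w'∘u' ∈ W and w∘v = w'∘v' ∈ W, there exist r, s with u∘r = v∘s, u'∘r = v'∘s, and w∘u∘r ∈ W. (Equivalently: the vertical arrow in C{W} between two objects with the same codomain is unique.) -/
/-! The Ore condition puts the two spans over a common refinement whose leg to `S.top` is in `W`;
the legs then agree after composing with `w`, resp. `w'`, and cancelling these two `W`-morphisms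
equalises them after one further `W`-morphism. -/

open CategoryTheory

universe v u

variable {C : Type u} [Category.{v} C]

namespace FractionsCalculus

variable {W : MorphismProperty C} (hW : FractionsCalculus W)
include hW

theorem exists_comp_eq_and_comp_eq {X A A' B B' : C} (f g : X ⟶ A) (f' g' : X ⟶ A')
    {w : A ⟶ B} {w' : A' ⟶ B'} (hw : W w) (hw' : W w')
    (h : f ≫ w = g ≫ w) (h' : f' ≫ w' = g' ≫ w') :
    ∃ (Y : C) (t : Y ⟶ X), W t ∧ t ≫ f = t ≫ g ∧ t ≫ f' = t ≫ g' := by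
  obtain ⟨Y, t, ht, hfg⟩ := hW.cancel f g w hw h
  have h'' : (t ≫ f') ≫ w' = (t ≫ g') ≫ w' := by simp only [Category.assoc, h']
  obtain ⟨Z, t', ht', hfg'⟩ := hW.cancel (t ≫ f') (t ≫ g') w' hw' h''
  refine ⟨Z, t' ≫ t, hW.comp _ _ ht' ht, ?_, ?_⟩
  · simp only [Category.assoc, hfg]
  · simpa only [Category.assoc] using hfg'

end FractionsCalculus

theorem statement2 (W : MorphismProperty C) (hW : FractionsCalculus W)
    {A A' B : C} (w : A ⟶ B) (w' : A' ⟶ B) (hw : W w) (hw' : W w')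
    (S T : ConnSpan W w w') :
    SpanEquiv W w w' S T := by
  obtain ⟨D, b, a, ha, hab⟩ := hW.ore (S.u ≫ w) (T.u ≫ w) T.mem
  have hu : (a ≫ S.u) ≫ w = (b ≫ T.u) ≫ w := by
    simpa only [Category.assoc] using hab.symm
  have hu' : (a ≫ S.u') ≫ w' = (b ≫ T.u') ≫ w' := by
    simpa only [Category.assoc, ← S.comm, ← T.comm] using hu
  obtain ⟨E, t, ht, h, h'⟩ :=
    hW.exists_comp_eq_and_comp_eq _ _ _ _ hw hw' hu hu'
  refine ⟨E, t ≫ a, t ≫ b, ?_, ?_, ?_⟩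
  · simpa only [Category.assoc] using h
  · simpa only [Category.assoc] using h'
  · simpa only [Category.assoc] using hW.comp _ _ ht (hW.comp _ _ ha S.mem)
end

section
/- Let C be a category and W a class of morphisms satisfying CF1, CF2, CF3. In the bicategory of fractions C(W⁻¹), whose 1-cells A → B are spans A ←w S →f B with w ∈ W, and whose 2-cells from (w₁, f₁) to (w₂, f₂) are equivalence classes of pairs (u₁ : T → S₁, u₂ : T → S₂) with w₁∘u₁ = w₂∘u₂ ∈ W, f₁∘u₁ = f₂∘u₂ (two such pairs being identified when they agree after precomposition with a common map whose composite with w₁∘u₁ is in W): there is at most one 2-cell between any two parallel 1-cells. -/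
/-!
STATEMENT 3: In the bicategory of fractions `C(W⁻¹)` of a category `C` with
`W` satisfying CF1–CF3, there is at most one 2-cell between any two parallel
1-cells (spans): the quotient of 2-cell representatives by the evident
equivalence relation is a subsingleton.
-/

open CategoryTheory

universe v u

variable {C : Type u} [Category.{v} C]

/-- A representative of a 2-cell in `C(W⁻¹)` from the span `(w₁, f₁)` to the
span `(w₂, f₂)` (spans `A ←w S →f B` with `w ∈ W`). -/
structure TwoCellRep (W : MorphismProperty C) {A B S₁ S₂ : C}
    (w₁ : S₁ ⟶ A) (f₁ : S₁ ⟶ B) (w₂ : S₂ ⟶ A) (f₂ : S₂ ⟶ B) where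
  top : C
  u₁ : top ⟶ S₁
  u₂ : top ⟶ S₂
  commW : u₁ ≫ w₁ = u₂ ≫ w₂
  mem : W (u₁ ≫ w₁)
  commF : u₁ ≫ f₁ = u₂ ≫ f₂

/-- Two 2-cell representatives are identified when they agree after
precomposition with a common map whose composite with `w₁ ∘ u₁` is in `W`. -/
def TwoCellEquiv (W : MorphismProperty C) {A B S₁ S₂ : C}
    (w₁ : S₁ ⟶ A) (f₁ : S₁ ⟶ B) (w₂ : S₂ ⟶ A) (f₂ : S₂ ⟶ B)
    (S T : TwoCellRep W w₁ f₁ w₂ f₂) : Prop :=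
  ∃ (E : C) (t : E ⟶ S.top) (t' : E ⟶ T.top),
    t ≫ S.u₁ = t' ≫ T.u₁ ∧ t ≫ S.u₂ = t' ≫ T.u₂ ∧ W (t ≫ S.u₁ ≫ w₁)

/-- There is at most one 2-cell between any two parallel 1-cells of `C(W⁻¹)`. -/
theorem statement3 (W : MorphismProperty C) (hW : FractionsCalculus W)
    {A B S₁ S₂ : C} (w₁ : S₁ ⟶ A) (w₂ : S₂ ⟶ A) (hw₁ : W w₁) (hw₂ : W w₂)
    (f₁ : S₁ ⟶ B) (f₂ : S₂ ⟶ B) :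
    Subsingleton (Quot (TwoCellEquiv W w₁ f₁ w₂ f₂)) := by
  constructor
  intro x y
  induction x using Quot.ind with | _ S =>
  induction y using Quot.ind with | _ T =>
  apply Quot.sound
  -- Step 1: Ore to get a common cover
  obtain ⟨D, t', t, hWt, hcomm⟩ := hW.ore (S.u₁ ≫ w₁) (T.u₁ ≫ w₁) T.mem
  -- hcomm : t' ≫ (T.u₁ ≫ w₁) = t ≫ (S.u₁ ≫ w₁)
  -- Step 2: cancel over w₁ to equalize on the u₁ leg
  obtain ⟨Y, s, hWs, hs⟩ := hW.cancel (t ≫ S.u₁) (t' ≫ T.u₁) w₁ hw₁ (by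
    simpa [Category.assoc] using hcomm.symm)
  -- Step 3: cancel over w₂ to equalize on the u₂ leg
  obtain ⟨Z, r, hWr, hr⟩ := hW.cancel (s ≫ t ≫ S.u₂) (s ≫ t' ≫ T.u₂) w₂ hw₂ (by
    have h1 : t ≫ S.u₂ ≫ w₂ = t ≫ S.u₁ ≫ w₁ := by rw [S.commW]
    have h2 : t' ≫ T.u₂ ≫ w₂ = t' ≫ T.u₁ ≫ w₁ := by rw [T.commW]
    have := hcomm.symm
    simp only [Category.assoc] at h1 h2 this ⊢
    rw [h1, h2, this])
  refine ⟨Z, r ≫ s ≫ t, r ≫ s ≫ t', ?_, ?_, ?_⟩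
  · simp only [Category.assoc]
    rw [hs]
  · simp only [Category.assoc]
    exact hr
  · have h : (r ≫ s ≫ t) ≫ S.u₁ ≫ w₁ = r ≫ (s ≫ (t ≫ S.u₁ ≫ w₁)) := by
      simp only [Category.assoc]
    rw [h]
    exact hW.comp _ _ hWr (hW.comp _ _ hWs (by
      simpa [Category.assoc] using hW.comp _ _ hWt S.mem))
end

section
/- Let C be a category and W a class of morphisms satisfying CF1, CF2, CF3. Given two 2-cell representatives between the same pair of parallel spans in C(W⁻¹), i.e., pairs (u₁ : T → S₁, u₂ : T → S₂) and (u₁' : T' → S₁, u₂' : T' → S₂) with w₁∘u₁ = w₂∘u₂, f₁∘u₁ = f₂∘u₂ and similarly for the primed data, there exist t : T̄ → T and t' : T̄ → T' with u₁∘t = u₁'∘t', u₂∘t = u₂'∘t', and w₁∘u₁∘t ∈ W. -/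
/-!
STATEMENT 4: Given two 2-cell representatives between the same pair of parallel
spans in `C(W⁻¹)`, there is a common refinement on which they agree, with the
relevant composite in `W`.
-/

open CategoryTheory

universe v u

variable {C : Type u} [Category.{v} C]

theorem statement4 (W : MorphismProperty C) (hW : FractionsCalculus W)
    {A B S₁ S₂ : C} (w₁ : S₁ ⟶ A) (w₂ : S₂ ⟶ A) (hw₁ : W w₁) (hw₂ : W w₂)
    (f₁ : S₁ ⟶ B) (f₂ : S₂ ⟶ B)
    {T T' : C} (u₁ : T ⟶ S₁) (u₂ : T ⟶ S₂) (u₁' : T' ⟶ S₁) (u₂' : T' ⟶ S₂)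
    (h₁ : u₁ ≫ w₁ = u₂ ≫ w₂) (h₁W : W (u₁ ≫ w₁)) (h₁F : u₁ ≫ f₁ = u₂ ≫ f₂)
    (h₂ : u₁' ≫ w₁ = u₂' ≫ w₂) (h₂W : W (u₁' ≫ w₁)) (h₂F : u₁' ≫ f₁ = u₂' ≫ f₂) :
    ∃ (Tbar : C) (t : Tbar ⟶ T) (t' : Tbar ⟶ T'),
      t ≫ u₁ = t' ≫ u₁' ∧ t ≫ u₂ = t' ≫ u₂' ∧ W (t ≫ u₁ ≫ w₁) := by
  obtain ⟨D, a, b, hb, hab⟩ := hW.ore (u₁' ≫ w₁) (u₁ ≫ w₁) h₁W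
  -- a : D ⟶ T, b : D ⟶ T', a ≫ (u₁ ≫ w₁) = b ≫ (u₁' ≫ w₁)
  obtain ⟨Y, c, hc, hceq⟩ := hW.cancel (a ≫ u₁) (b ≫ u₁') w₁ hw₁ (by
    simpa [Category.assoc] using hab)
  have hceq' : c ≫ a ≫ u₁ ≫ w₁ = c ≫ b ≫ u₁' ≫ w₁ := by
    have := congrArg (· ≫ w₁) hceq
    simpa [Category.assoc] using this
  have key : (c ≫ a ≫ u₂) ≫ w₂ = (c ≫ b ≫ u₂') ≫ w₂ := by
    have e1 : (c ≫ a ≫ u₂) ≫ w₂ = c ≫ a ≫ u₁ ≫ w₁ := by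
      simp only [Category.assoc, ← h₁]
    have e2 : (c ≫ b ≫ u₂') ≫ w₂ = c ≫ b ≫ u₁' ≫ w₁ := by
      simp only [Category.assoc, ← h₂]
    rw [e1, e2, hceq']
  obtain ⟨Z, d, hd, hdeq⟩ := hW.cancel (c ≫ a ≫ u₂) (c ≫ b ≫ u₂') w₂ hw₂ key
  refine ⟨Z, d ≫ c ≫ a, d ≫ c ≫ b, ?_, ?_, ?_⟩
  · simp only [Category.assoc, hceq]
  · simpa [Category.assoc] using hdeq
  · have : (d ≫ c ≫ a) ≫ u₁ ≫ w₁ = d ≫ c ≫ b ≫ u₁' ≫ w₁ := by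
      simp only [Category.assoc, hab]
    rw [this]
    exact hW.comp _ _ hd (hW.comp _ _ hc (hW.comp _ _ hb h₂W))
end

section
/- Let C be a category with W satisfying CF1–CF3. In the double category C{W} (objects: arrows of W; vertical arrows: equivalence classes of connecting spans; horizontal arrows (w : A → B) → (w' : A' → B') are arrows f : A → A' of C; double cells: equivalence classes of commutative diagrams as in the fractions construction), for every horizontal arrow g : (w₂) → (w₂') and every vertical arrow [v₁, D, v₂] : (w₁') ⇸ (w₂'), there exists a double cell with g as horizontal codomain and [v₁, D, v₂] as right vertical boundary; i.e., the codomain functor d₁ : C{W}₁ → C{W}₀ is an isofibration. -/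
/-!
STATEMENT 13: In the weakly globular double category of fractions `C{W}`, for
every horizontal arrow `g : (w₂) → (w₂')` and every vertical arrow
`[v₁, D, v₂] : (w₁') ⇸ (w₂')` there is a double cell with `g` as horizontal
codomain and `[v₁, D, v₂]` as right vertical boundary; i.e. the codomain
functor `d₁ : C{W}₁ → C{W}₀` is an isofibration.  (Stated on
representatives: the produced double cell is given by a representative
diagram whose right-hand connecting span is exactly `(v₁, v₂)`.)
-/

open CategoryTheory

universe v u

variable {C : Type u} [Category.{v} C]

/-- Two connecting spans `(p₁, p₂)` and `(q₁, q₂)` between `w₁ : A₁ ⟶ B` and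
`w₂ : A₂ ⟶ B` represent the same vertical arrow of `C{W}`. -/
def SpanEquivRaw (W : MorphismProperty C) {A₁ A₂ B : C}
    (w₁ : A₁ ⟶ B) (w₂ : A₂ ⟶ B) {P Q : C}
    (p₁ : P ⟶ A₁) (p₂ : P ⟶ A₂) (q₁ : Q ⟶ A₁) (q₂ : Q ⟶ A₂) : Prop :=
  ∃ (E : C) (r : E ⟶ P) (s : E ⟶ Q),
    r ≫ p₁ = s ≫ q₁ ∧ r ≫ p₂ = s ≫ q₂ ∧ W (r ≫ p₁ ≫ w₁)

/-- A representative diagram of a double cell of `C{W}` in the frame given by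
objects `(w₁ : A₁ ⟶ B)`, `(w₂ : A₂ ⟶ B)`, `(w₁' : A₁' ⟶ B')`,
`(w₂' : A₂' ⟶ B')` (top-left, bottom-left, top-right and bottom-right),
top horizontal arrow `f₁ : (w₁) → (w₁')` and bottom horizontal arrow
`f₂ : (w₂) → (w₂')`; the left and right vertical boundaries are the classes
of the connecting spans `(u₁, u₂)` and `(u₁', u₂')`. -/
structure CellDiag (W : MorphismProperty C) {A₁ A₂ B A₁' A₂' B' : C}
    (w₁ : A₁ ⟶ B) (w₂ : A₂ ⟶ B) (w₁' : A₁' ⟶ B') (w₂' : A₂' ⟶ B')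
    (f₁ : A₁ ⟶ A₁') (f₂ : A₂ ⟶ A₂') where
  left : C
  right : C
  u₁ : left ⟶ A₁
  u₂ : left ⟶ A₂
  u₁' : right ⟶ A₁'
  u₂' : right ⟶ A₂'
  φ : left ⟶ right
  commL : u₁ ≫ w₁ = u₂ ≫ w₂
  memL : W (u₁ ≫ w₁)
  commR : u₁' ≫ w₁' = u₂' ≫ w₂'
  memR : W (u₁' ≫ w₁')
  commTop : u₁ ≫ f₁ = φ ≫ u₁'
  commBot : u₂ ≫ f₂ = φ ≫ u₂'

theorem statement13 (W : MorphismProperty C) (hW : FractionsCalculus W)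
    {A₂ B A₁' A₂' B' : C} (w₂ : A₂ ⟶ B) (hw₂ : W w₂)
    (w₁' : A₁' ⟶ B') (hw₁' : W w₁') (w₂' : A₂' ⟶ B') (hw₂' : W w₂')
    (g : A₂ ⟶ A₂')
    {D : C} (v₁ : D ⟶ A₁') (v₂ : D ⟶ A₂')
    (hv : v₁ ≫ w₁' = v₂ ≫ w₂') (hvW : W (v₁ ≫ w₁')) :
    ∃ (A₁ Cc : C) (w₁ : A₁ ⟶ B) (f : A₁ ⟶ A₁')
      (u₁ : Cc ⟶ A₁) (u₂ : Cc ⟶ A₂) (φ : Cc ⟶ D),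
      W w₁ ∧ u₁ ≫ w₁ = u₂ ≫ w₂ ∧ W (u₁ ≫ w₁) ∧
      u₁ ≫ f = φ ≫ v₁ ∧ u₂ ≫ g = φ ≫ v₂ := by

  obtain ⟨Cc₀, φ₀, u₂₀, hu₂₀W, hore⟩ := hW.ore (g ≫ w₂') (v₁ ≫ w₁') hvW
  have h1 : u₂₀ ≫ (g ≫ w₂') = φ₀ ≫ (v₂ ≫ w₂') := by
    rw [← hore]; rw [← hv]
  have h2 : (u₂₀ ≫ g) ≫ w₂' = (φ₀ ≫ v₂) ≫ w₂' := by
    simpa [Category.assoc] using h1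
  obtain ⟨Y, wt, hwtW, hcancel⟩ := hW.cancel (u₂₀ ≫ g) (φ₀ ≫ v₂) w₂' hw₂' h2
  refine ⟨Y, Y, (wt ≫ u₂₀) ≫ w₂, wt ≫ φ₀ ≫ v₁, 𝟙 Y, wt ≫ u₂₀, wt ≫ φ₀, ?_, ?_, ?_, ?_, ?_⟩
  · exact hW.comp _ _ (hW.comp _ _ hwtW hu₂₀W) hw₂
  · simp [Category.assoc]
  · simpa using hW.comp _ _ (hW.comp _ _ hwtW hu₂₀W) hw₂
  · simp [Category.assoc]
  · simpa [Category.assoc] using hcancel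
end

section
/- Let C be a category with W satisfying CF1–CF3. In C{W}, given any frame consisting of horizontal arrows f₁ : (w₁) → (w₁'), f₂ : (w₂) → (w₂') and vertical arrows [u₁, C, u₂] : (w₁) ⇸ (w₂), [v₁, D, v₂] : (w₁') ⇸ (w₂'), there is at most one double cell filling this frame. -/
/-!
STATEMENT 14: In `C{W}`, given any frame of horizontal arrows
`f₁ : (w₁) → (w₁')`, `f₂ : (w₂) → (w₂')` and vertical arrows
`[u₁, C, u₂] : (w₁) ⇸ (w₂)`, `[v₁, D, v₂] : (w₁') ⇸ (w₂')`, there is at most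
one double cell filling it: any two representative diagrams filling the frame
(i.e. whose left, resp. right, connecting spans represent the same vertical
arrows) are equivalent, via a common refinement as in the definition of
double cells of `C{W}`.
-/

open CategoryTheory

universe v u

variable {C : Type u} [Category.{v} C]

/-- Equivalence of double cell representative diagrams in `C{W}`. -/
def CellDiagEquiv (W : MorphismProperty C) {A₁ A₂ B A₁' A₂' B' : C}
    {w₁ : A₁ ⟶ B} {w₂ : A₂ ⟶ B} {w₁' : A₁' ⟶ B'} {w₂' : A₂' ⟶ B'}
    {f₁ : A₁ ⟶ A₁'} {f₂ : A₂ ⟶ A₂'}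
    (S T : CellDiag W w₁ w₂ w₁' w₂' f₁ f₂) : Prop :=
  ∃ (E E' : C) (r : E ⟶ S.left) (s : E ⟶ T.left)
    (r' : E' ⟶ S.right) (s' : E' ⟶ T.right) (χ : E ⟶ E'),
    W (r ≫ S.u₁ ≫ w₁) ∧ W (r' ≫ S.u₁' ≫ w₁') ∧
    r ≫ S.u₁ = s ≫ T.u₁ ∧ r ≫ S.u₂ = s ≫ T.u₂ ∧
    r' ≫ S.u₁' = s' ≫ T.u₁' ∧ r' ≫ S.u₂' = s' ≫ T.u₂' ∧
    r ≫ S.φ = χ ≫ r' ∧ s ≫ T.φ = χ ≫ s'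

theorem statement14 (W : MorphismProperty C) (hW : FractionsCalculus W)
    {A₁ A₂ B A₁' A₂' B' : C}
    (w₁ : A₁ ⟶ B) (w₂ : A₂ ⟶ B) (w₁' : A₁' ⟶ B') (w₂' : A₂' ⟶ B')
    (hw₁ : W w₁) (hw₂ : W w₂) (hw₁' : W w₁') (hw₂' : W w₂')
    (f₁ : A₁ ⟶ A₁') (f₂ : A₂ ⟶ A₂')
    (S T : CellDiag W w₁ w₂ w₁' w₂' f₁ f₂)
    -- the two diagrams fill the same frame: their vertical boundaries agree
    (hL : SpanEquivRaw W w₁ w₂ S.u₁ S.u₂ T.u₁ T.u₂)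
    (hR : SpanEquivRaw W w₁' w₂' S.u₁' S.u₂' T.u₁' T.u₂') :
    CellDiagEquiv W S T := by
  obtain ⟨E, r, s, h1, h2, hWr⟩ := hL
  obtain ⟨E', r', s', h1', h2', hWr'⟩ := hR
  -- Ore: compare r ≫ S.φ with r' over B'
  obtain ⟨D, fbar, wbar, hWwbar, hOre⟩ :=
    hW.ore (r ≫ S.φ ≫ S.u₁' ≫ w₁') (r' ≫ S.u₁' ≫ w₁') hWr'
  -- first cancellation: against S.u₁' ≫ w₁'
  obtain ⟨Y, wt, hWwt, hwt⟩ :=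
    hW.cancel (wbar ≫ r ≫ S.φ) (fbar ≫ r') (S.u₁' ≫ w₁') S.memR
      (by simpa only [Category.assoc] using hOre.symm)
  -- second cancellation: against T.u₁' ≫ w₁'
  have key : ((wt ≫ wbar ≫ s ≫ T.φ) ≫ (T.u₁' ≫ w₁')) =
      ((wt ≫ fbar ≫ s') ≫ (T.u₁' ≫ w₁')) := by
    have e1 : s ≫ T.φ ≫ T.u₁' = r ≫ S.φ ≫ S.u₁' := by
      rw [← T.commTop, ← S.commTop, ← Category.assoc, ← Category.assoc, h1]
    have e2 : s' ≫ T.u₁' = r' ≫ S.u₁' := h1'.symm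
    calc (wt ≫ wbar ≫ s ≫ T.φ) ≫ T.u₁' ≫ w₁'
        = wt ≫ wbar ≫ (s ≫ T.φ ≫ T.u₁') ≫ w₁' := by
          simp only [Category.assoc]
      _ = wt ≫ wbar ≫ (r ≫ S.φ ≫ S.u₁') ≫ w₁' := by rw [e1]
      _ = (wt ≫ wbar ≫ r ≫ S.φ) ≫ S.u₁' ≫ w₁' := by
          simp only [Category.assoc]
      _ = (wt ≫ fbar ≫ r') ≫ S.u₁' ≫ w₁' := by
          have := congrArg (· ≫ (S.u₁' ≫ w₁')) hwt
          simpa only [Category.assoc] using this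
      _ = wt ≫ fbar ≫ (s' ≫ T.u₁') ≫ w₁' := by
          rw [e2]; simp only [Category.assoc]
      _ = (wt ≫ fbar ≫ s') ≫ T.u₁' ≫ w₁' := by
          simp only [Category.assoc]
  obtain ⟨Y₂, wt₂, hWwt₂, hwt₂⟩ :=
    hW.cancel (wt ≫ wbar ≫ s ≫ T.φ) (wt ≫ fbar ≫ s') (T.u₁' ≫ w₁') T.memR key
  refine ⟨Y₂, E', wt₂ ≫ wt ≫ wbar ≫ r, wt₂ ≫ wt ≫ wbar ≫ s, r', s',
    wt₂ ≫ wt ≫ fbar, ?_, hWr', ?_, ?_, h1', h2', ?_, ?_⟩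
  · simp only [Category.assoc]
    exact hW.comp _ _ hWwt₂ (hW.comp _ _ hWwt (hW.comp _ _ hWwbar hWr))
  · simp only [Category.assoc, h1]
  · simp only [Category.assoc, h2]
  · have := congrArg (wt₂ ≫ ·) hwt
    simpa only [Category.assoc] using this
  · simpa only [Category.assoc] using hwt₂
end

section
/- Let C be a category with W satisfying CF1–CF3. Given a representative (C, u₁, u₂, φ, C', u₁', u₂') of a double cell in C{W} and another representative (v₁, D, v₂) of its codomain vertical arrow [u₁', C', u₂'], there exist r : E → C with w₁u₁r ∈ W and ψ : E → D such that (E, u₁r, u₂r, ψ, D, v₁, v₂) represents the same double cell. -/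
/-!
Choose a representative `(ρ, F, s)` of the equivalence between `(u₁', u₂')` and `(v₁, v₂)`.
Since `u₁' ≫ w₁'` and `ρ ≫ u₁' ≫ w₁'` lie in `W`, CF2 followed by CF3 (cancelling `u₁' ≫ w₁'`)
produces `r : E ⟶ S.left` in `W` and `χ : E ⟶ F` with `r ≫ φ = χ ≫ ρ`. Then `ψ := χ ≫ s` makes
`(E, r ≫ u₁, r ≫ u₂, ψ, D, v₁, v₂)` a double cell diagram, and `(r, 𝟙, ρ, s, χ)` witnesses that it
is equivalent to the given one.
-/

open CategoryTheory

universe v u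

variable {C : Type u} [Category.{v} C]

namespace FractionsCalculus

variable {W : MorphismProperty C}

theorem exists_comm_sq_of_comp_mem (hW : FractionsCalculus W) {X F Z T : C}
    (g : X ⟶ Z) (ρ : F ⟶ Z) (m : Z ⟶ T) (hm : W m) (hρm : W (ρ ≫ m)) :
    ∃ (E : C) (r : E ⟶ X) (χ : E ⟶ F), W r ∧ r ≫ g = χ ≫ ρ := by
  obtain ⟨D, fbar, wbar, hwbar, hsq⟩ := hW.ore (g ≫ m) (ρ ≫ m) hρm
  obtain ⟨E, wt, hwt, hcancel⟩ := hW.cancel (fbar ≫ ρ) (wbar ≫ g) m hm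
    (by simpa only [Category.assoc] using hsq)
  exact ⟨E, wt ≫ wbar, wt ≫ fbar, hW.comp wt wbar hwt hwbar,
    by simpa only [Category.assoc] using hcancel.symm⟩

end FractionsCalculus

theorem comp_comm_of_comm_sq {E X Y F D A A' : C}
    {r : E ⟶ X} {u : X ⟶ A} {f : A ⟶ A'} {φ : X ⟶ Y} {u' : Y ⟶ A'}
    {χ : E ⟶ F} {ρ : F ⟶ Y} {s : F ⟶ D} {v : D ⟶ A'}
    (hcell : u ≫ f = φ ≫ u') (hsq : r ≫ φ = χ ≫ ρ) (hrep : ρ ≫ u' = s ≫ v) :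
    (r ≫ u) ≫ f = (χ ≫ s) ≫ v := by
  simp only [Category.assoc]
  rw [hcell, ← Category.assoc, hsq, Category.assoc, hrep]

theorem statement15_general (W : MorphismProperty C) (hW : FractionsCalculus W)
    {A₁ A₂ B A₁' A₂' B' : C}
    (w₁ : A₁ ⟶ B) (w₂ : A₂ ⟶ B) (w₁' : A₁' ⟶ B') (w₂' : A₂' ⟶ B')
    (f₁ : A₁ ⟶ A₁') (f₂ : A₂ ⟶ A₂')
    (S : CellDiag W w₁ w₂ w₁' w₂' f₁ f₂)
    -- another representative `(v₁, D, v₂)` of the codomain vertical arrow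
    {D : C} (v₁ : D ⟶ A₁') (v₂ : D ⟶ A₂')
    (hrep : SpanEquivRaw W w₁' w₂' S.u₁' S.u₂' v₁ v₂) :
    ∃ (E : C) (r : E ⟶ S.left) (ψ : E ⟶ D),
      W ((r ≫ S.u₁) ≫ w₁) ∧
      -- `(E, u₁ ∘ r, u₂ ∘ r, ψ, D, v₁, v₂)` is a double cell diagram
      (r ≫ S.u₁) ≫ f₁ = ψ ≫ v₁ ∧ (r ≫ S.u₂) ≫ f₂ = ψ ≫ v₂ ∧
      -- which represents the same double cell as `S`
      (∃ (E₀ E₀' : C) (a : E₀ ⟶ S.left) (b : E₀ ⟶ E)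
          (a' : E₀' ⟶ S.right) (b' : E₀' ⟶ D) (χ : E₀ ⟶ E₀'),
        W (a ≫ S.u₁ ≫ w₁) ∧ W (a' ≫ S.u₁' ≫ w₁') ∧
        a ≫ S.u₁ = b ≫ (r ≫ S.u₁) ∧ a ≫ S.u₂ = b ≫ (r ≫ S.u₂) ∧
        a' ≫ S.u₁' = b' ≫ v₁ ∧ a' ≫ S.u₂' = b' ≫ v₂ ∧
        a ≫ S.φ = χ ≫ a' ∧ b ≫ ψ = χ ≫ b') := by
  obtain ⟨F, ρ, s, hrep₁, hrep₂, hρ⟩ := hrep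
  obtain ⟨E, r, χ, hr, hsq⟩ :=
    hW.exists_comm_sq_of_comp_mem S.φ ρ (S.u₁' ≫ w₁') S.memR hρ
  have hrW : W (r ≫ S.u₁ ≫ w₁) := hW.comp r _ hr S.memL
  refine ⟨E, r, χ ≫ s, by rwa [Category.assoc],
    comp_comm_of_comm_sq S.commTop hsq hrep₁, comp_comm_of_comm_sq S.commBot hsq hrep₂,
    E, F, r, 𝟙 E, ρ, s, χ, hrW, hρ, by simp, by simp, hrep₁, hrep₂, hsq, by simp⟩

theorem statement15 (W : MorphismProperty C) (hW : FractionsCalculus W)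
    {A₁ A₂ B A₁' A₂' B' : C}
    (w₁ : A₁ ⟶ B) (w₂ : A₂ ⟶ B) (w₁' : A₁' ⟶ B') (w₂' : A₂' ⟶ B')
    (hw₁ : W w₁) (hw₂ : W w₂) (hw₁' : W w₁') (hw₂' : W w₂')
    (f₁ : A₁ ⟶ A₁') (f₂ : A₂ ⟶ A₂')
    (S : CellDiag W w₁ w₂ w₁' w₂' f₁ f₂)
    -- another representative `(v₁, D, v₂)` of the codomain vertical arrow
    {D : C} (v₁ : D ⟶ A₁') (v₂ : D ⟶ A₂')
    (hv : v₁ ≫ w₁' = v₂ ≫ w₂') (hvW : W (v₁ ≫ w₁'))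
    (hrep : SpanEquivRaw W w₁' w₂' S.u₁' S.u₂' v₁ v₂) :
    ∃ (E : C) (r : E ⟶ S.left) (ψ : E ⟶ D),
      W ((r ≫ S.u₁) ≫ w₁) ∧
      -- `(E, u₁ ∘ r, u₂ ∘ r, ψ, D, v₁, v₂)` is a double cell diagram
      (r ≫ S.u₁) ≫ f₁ = ψ ≫ v₁ ∧ (r ≫ S.u₂) ≫ f₂ = ψ ≫ v₂ ∧
      -- which represents the same double cell as `S`
      (∃ (E₀ E₀' : C) (a : E₀ ⟶ S.left) (b : E₀ ⟶ E)
          (a' : E₀' ⟶ S.right) (b' : E₀' ⟶ D) (χ : E₀ ⟶ E₀'),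
        W (a ≫ S.u₁ ≫ w₁) ∧ W (a' ≫ S.u₁' ≫ w₁') ∧
        a ≫ S.u₁ = b ≫ (r ≫ S.u₁) ∧ a ≫ S.u₂ = b ≫ (r ≫ S.u₂) ∧
        a' ≫ S.u₁' = b' ≫ v₁ ∧ a' ≫ S.u₂' = b' ≫ v₂ ∧
        a ≫ S.φ = χ ≫ a' ∧ b ≫ ψ = χ ≫ b') :=
  statement15_general W hW w₁ w₂ w₁' w₂' f₁ f₂ S v₁ v₂ hrep
end

section
/- Let C be a category with W satisfying CF1–CF3. Every double cell of C{W} can be written as a (finite) pasting of companion binding cells (cells ψ_{u,w} and χ_{u,w} associated to companion pairs of the form u : (wu) → (w)), their vertical inverses, and horizontal and vertical identity cells. -/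
/-!
STATEMENT 19: Every double cell of `C{W}` can be written as a (finite)
pasting of the companion binding cells `ψ_{u,w}`, `χ_{u,w}` (associated with
the companion pairs of the form `u : (w ∘ u) → (w)`), their vertical
inverses, and horizontal and vertical identity cells.

Since the vertical cell category of `C{W}` is a posetal groupoid, there is at
most one double cell in any given frame, and the vertical boundaries of a
frame are determined by its corners; so a pasting decomposition of a double
cell is precisely a decomposition of its frame by the inductively generated
class `GenFrame` below.
-/

open CategoryTheory

universe v u

variable {C : Type u} [Category.{v} C]

/-- The frames of double cells of `C{W}` generated by the companion binding
cells `ψ_{u,w}`, `χ_{u,w}`, vertical inversion, horizontal and vertical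
identity cells, and horizontal and vertical pasting.  A frame is recorded by
its four corner objects `(w₁) (w₂) (w₁') (w₂')` (top-left, bottom-left,
top-right, bottom-right) and its top and bottom horizontal arrows. -/
inductive GenFrame (W : MorphismProperty C) :
    ∀ {A₁ A₂ B A₁' A₂' B' : C}, (A₁ ⟶ B) → (A₂ ⟶ B) → (A₁' ⟶ B') → (A₂' ⟶ B') →
      (A₁ ⟶ A₁') → (A₂ ⟶ A₂') → Prop
  | psi {X A B : C} (u : X ⟶ A) (w : A ⟶ B) (hw : W w) (hu : W (u ≫ w)) :
      GenFrame W (u ≫ w) (u ≫ w) (u ≫ w) w (𝟙 X) u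
  | chi {X A B : C} (u : X ⟶ A) (w : A ⟶ B) (hw : W w) (hu : W (u ≫ w)) :
      GenFrame W (u ≫ w) w w w u (𝟙 A)
  | vflip {A₁ A₂ B A₁' A₂' B' : C} {w₁ : A₁ ⟶ B} {w₂ : A₂ ⟶ B} {w₁' : A₁' ⟶ B'}
      {w₂' : A₂' ⟶ B'} {f₁ : A₁ ⟶ A₁'} {f₂ : A₂ ⟶ A₂'} :
      GenFrame W w₁ w₂ w₁' w₂' f₁ f₂ → GenFrame W w₂ w₁ w₂' w₁' f₂ f₁
  | hid {A₁ A₂ B : C} (w₁ : A₁ ⟶ B) (w₂ : A₂ ⟶ B) (h₁ : W w₁) (h₂ : W w₂) :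
      GenFrame W w₁ w₂ w₁ w₂ (𝟙 A₁) (𝟙 A₂)
  | vid {A₁ A₁' B B' : C} (w₁ : A₁ ⟶ B) (w₁' : A₁' ⟶ B') (h₁ : W w₁) (h₁' : W w₁')
      (f : A₁ ⟶ A₁') : GenFrame W w₁ w₁ w₁' w₁' f f
  | hcomp {A₁ A₂ B A₁' A₂' B' A₁'' A₂'' B'' : C}
      {w₁ : A₁ ⟶ B} {w₂ : A₂ ⟶ B} {w₁' : A₁' ⟶ B'} {w₂' : A₂' ⟶ B'}
      {w₁'' : A₁'' ⟶ B''} {w₂'' : A₂'' ⟶ B''}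
      {f₁ : A₁ ⟶ A₁'} {f₂ : A₂ ⟶ A₂'} {g₁ : A₁' ⟶ A₁''} {g₂ : A₂' ⟶ A₂''} :
      GenFrame W w₁ w₂ w₁' w₂' f₁ f₂ → GenFrame W w₁' w₂' w₁'' w₂'' g₁ g₂ →
      GenFrame W w₁ w₂ w₁'' w₂'' (f₁ ≫ g₁) (f₂ ≫ g₂)
  | vcomp {A₁ A₂ A₃ B A₁' A₂' A₃' B' : C}
      {w₁ : A₁ ⟶ B} {w₂ : A₂ ⟶ B} {w₃ : A₃ ⟶ B}
      {w₁' : A₁' ⟶ B'} {w₂' : A₂' ⟶ B'} {w₃' : A₃' ⟶ B'}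
      {f₁ : A₁ ⟶ A₁'} {f₂ : A₂ ⟶ A₂'} {f₃ : A₃ ⟶ A₃'} :
      GenFrame W w₁ w₂ w₁' w₂' f₁ f₂ → GenFrame W w₂ w₃ w₂' w₃' f₂ f₃ →
      GenFrame W w₁ w₃ w₁' w₃' f₁ f₃

/-!
A representative `φ : left ⟶ right` of a cell, with connecting spans `(u₁, u₂)` and `(u₁', u₂')`,
splits the cell vertically through the middle row `(u₁ ≫ w₁) = (u₂ ≫ w₂) → (u₁' ≫ w₁')` with
horizontal arrow `φ`. Each half is a square of the shape `u ≫ f = φ ≫ u'`, and such a square is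
the vertical pasting of `vid φ | ψ_{u',w'}` over `χ_{u,w} | vid f`.
-/

namespace GenFrame

variable {W : MorphismProperty C}

theorem of_comm {L A B R A' B' : C} {u : L ⟶ A} {w : A ⟶ B} {u' : R ⟶ A'} {w' : A' ⟶ B'}
    {φ : L ⟶ R} {f : A ⟶ A'} (hw : W w) (hu : W (u ≫ w)) (hw' : W w') (hu' : W (u' ≫ w'))
    (h : u ≫ f = φ ≫ u') : GenFrame W (u ≫ w) w (u' ≫ w') w' φ f := by
  have top : GenFrame W (u ≫ w) (u ≫ w) (u' ≫ w') w' φ (φ ≫ u') := by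
    simpa only [Category.comp_id] using (vid _ _ hu hu' φ).hcomp (psi u' w' hw' hu')
  have bottom : GenFrame W (u ≫ w) w w' w' (φ ≫ u') f := by
    simpa only [Category.id_comp, h] using (chi u w hw hu).hcomp (vid w w' hw hw' f)
  exact top.vcomp bottom

end GenFrame

theorem statement19_general (W : MorphismProperty C)
    {A₁ A₂ B A₁' A₂' B' : C}
    (w₁ : A₁ ⟶ B) (w₂ : A₂ ⟶ B) (w₁' : A₁' ⟶ B') (w₂' : A₂' ⟶ B')
    (hw₁ : W w₁) (hw₂ : W w₂) (hw₁' : W w₁') (hw₂' : W w₂')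
    (f₁ : A₁ ⟶ A₁') (f₂ : A₂ ⟶ A₂')
    (hcell : Nonempty (CellDiag W w₁ w₂ w₁' w₂' f₁ f₂)) :
    GenFrame W w₁ w₂ w₁' w₂' f₁ f₂ := by
  obtain ⟨d⟩ := hcell
  have upper : GenFrame W w₁ (d.u₂ ≫ w₂) w₁' (d.u₂' ≫ w₂') f₁ d.φ := by
    rw [← d.commL, ← d.commR]
    exact (GenFrame.of_comm hw₁ d.memL hw₁' d.memR d.commTop).vflip
  have lower : GenFrame W (d.u₂ ≫ w₂) w₂ (d.u₂' ≫ w₂') w₂' d.φ f₂ :=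
    GenFrame.of_comm hw₂ (d.commL ▸ d.memL) hw₂' (d.commR ▸ d.memR) d.commBot
  exact upper.vcomp lower

theorem statement19 (W : MorphismProperty C) (hW : FractionsCalculus W)
    {A₁ A₂ B A₁' A₂' B' : C}
    (w₁ : A₁ ⟶ B) (w₂ : A₂ ⟶ B) (w₁' : A₁' ⟶ B') (w₂' : A₂' ⟶ B')
    (hw₁ : W w₁) (hw₂ : W w₂) (hw₁' : W w₁') (hw₂' : W w₂')
    (f₁ : A₁ ⟶ A₁') (f₂ : A₂ ⟶ A₂')
    (hcell : Nonempty (CellDiag W w₁ w₂ w₁' w₂' f₁ f₂)) :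
    GenFrame W w₁ w₂ w₁' w₂' f₁ f₂ :=
  statement19_general W w₁ w₂ w₁' w₂' hw₁ hw₂ hw₁' hw₂' f₁ f₂ hcell
end
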